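/- arXiv:2503.19612 — 7 statements merged into one kernel-verified Lean document; each statement's English description precedes it below -/
import Mathlib

section
/- The policy π* is a global maximizer of the regularized objective: for every policy π (with the convention 0·log 0 = 0 in the KL term), G(π) ≤ G(π*). -/
open Finset

noncomputable section

/-- KL divergence between two distributions on a finite type
(with the convention `0 * log 0 = 0`, which holds since `Real.log 0 = 0`). -/
def KLdiv {Y : Type*} [Fintype Y] (p q : Y → ℝ) : ℝ :=
  ∑ y, p y * Real.log (p y / q y)

/-- The optimal regularized policy `π*`. -/
def piStar {X Y : Type*} [Fintype Y] (πref r : X → Y → ℝ) (β : ℝ) (x : X) (y : Y) : ℝ :=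
  πref x y * Real.exp (r x y / β) / ∑ y', πref x y' * Real.exp (r x y' / β)

/-- The KL-regularized objective `G`. -/
def G {X Y : Type*} [Fintype X] [Fintype Y] (ρ : X → ℝ) (πref r : X → Y → ℝ) (β : ℝ)
    (π : X → Y → ℝ) : ℝ :=
  ∑ x, ρ x * ((∑ y, π x y * r x y) - β * KLdiv (π x) (πref x))

/-- Gibbs' inequality: KL divergence is nonnegative. -/
lemma KLdiv_nonneg {Y : Type*} [Fintype Y] (p q : Y → ℝ)
    (hp : ∀ y, 0 ≤ p y) (hq : ∀ y, 0 < q y)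
    (hps : ∑ y, p y = 1) (hqs : ∑ y, q y = 1) : 0 ≤ KLdiv p q := by
  have key : ∑ y, p y * Real.log (q y / p y) ≤ ∑ y, (q y - p y) := by
    apply Finset.sum_le_sum
    intro y _
    rcases eq_or_lt_of_le (hp y) with h | h
    · simp [← h, (hq y).le]
    · have hqp : 0 < q y / p y := div_pos (hq y) h
      calc p y * Real.log (q y / p y) ≤ p y * (q y / p y - 1) := by
            exact mul_le_mul_of_nonneg_left (Real.log_le_sub_one_of_pos hqp) (hp y)
        _ = q y - p y := by field_simp
  have hsum : ∑ y, (q y - p y) = 0 := by rw [Finset.sum_sub_distrib, hps, hqs]; ring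
  have : ∑ y, p y * Real.log (q y / p y) ≤ 0 := by linarith [key, hsum.le]
  have heq : KLdiv p q = -∑ y, p y * Real.log (q y / p y) := by
    rw [← Finset.sum_neg_distrib]
    apply Finset.sum_congr rfl
    intro y _
    rcases eq_or_lt_of_le (hp y) with h | h
    · simp [← h]
    · rw [Real.log_div (ne_of_gt (hq y)) (ne_of_gt h),
        Real.log_div (ne_of_gt h) (ne_of_gt (hq y))]
      ring
  rw [heq]
  linarith

/-- `π*` globally maximizes the regularized objective. -/
theorem piStar_is_global_maximizer
    {X Y : Type*} [Fintype X] [Fintype Y] [Nonempty X] [Nonempty Y]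
    (πref : X → Y → ℝ) (href_pos : ∀ x y, 0 < πref x y)
    (href_sum : ∀ x, ∑ y, πref x y = 1)
    (r : X → Y → ℝ) (β : ℝ) (hβ : 0 < β)
    (ρ : X → ℝ) (hρ_nonneg : ∀ x, 0 ≤ ρ x) (hρ_sum : ∑ x, ρ x = 1)
    (π : X → Y → ℝ) (hπ_nonneg : ∀ x y, 0 ≤ π x y) (hπ_sum : ∀ x, ∑ y, π x y = 1) :
    G ρ πref r β π ≤ G ρ πref r β (piStar πref r β) := by
  set Z : X → ℝ := fun x => ∑ y', πref x y' * Real.exp (r x y' / β) with hZdef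
  have hZpos : ∀ x, 0 < Z x := fun x =>
    Finset.sum_pos (fun y _ => mul_pos (href_pos x y) (Real.exp_pos _)) univ_nonempty
  have hstar_pos : ∀ x y, 0 < piStar πref r β x y := fun x y =>
    div_pos (mul_pos (href_pos x y) (Real.exp_pos _)) (hZpos x)
  have hstar_sum : ∀ x, ∑ y, piStar πref r β x y = 1 := by
    intro x
    simp only [piStar]
    rw [← Finset.sum_div]
    exact div_self (ne_of_gt (hZpos x))
  have hlogstar : ∀ x y, Real.log (piStar πref r β x y)
      = Real.log (πref x y) + r x y / β - Real.log (Z x) := by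
    intro x y
    have hps : piStar πref r β x y = πref x y * Real.exp (r x y / β) / Z x := rfl
    rw [hps, Real.log_div (ne_of_gt (mul_pos (href_pos x y) (Real.exp_pos _)))
      (ne_of_gt (hZpos x)),
      Real.log_mul (ne_of_gt (href_pos x y)) (ne_of_gt (Real.exp_pos _)),
      Real.log_exp]
  -- key identity: per-x objective of any policy σ equals β log Z − β KL(σ, π*)
  have key : ∀ (σ : X → Y → ℝ), (∀ x y, 0 ≤ σ x y) → (∀ x, ∑ y, σ x y = 1) →
      ∀ x, (∑ y, σ x y * r x y) - β * KLdiv (σ x) (πref x)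
        = β * Real.log (Z x) - β * KLdiv (σ x) (piStar πref r β x) := by
    intro σ hσ0 hσ1 x
    have hterm : ∀ y, σ x y * r x y - β * (σ x y * Real.log (σ x y / πref x y))
        = β * (σ x y * Real.log (Z x))
          - β * (σ x y * Real.log (σ x y / piStar πref r β x y)) := by
      intro y
      rcases eq_or_lt_of_le (hσ0 x y) with h | h
      · simp [← h]
      · rw [Real.log_div (ne_of_gt h) (ne_of_gt (href_pos x y)),
          Real.log_div (ne_of_gt h) (ne_of_gt (hstar_pos x y)), hlogstar]
        field_simp
        ring
    have : ∑ y, (σ x y * r x y - β * (σ x y * Real.log (σ x y / πref x y)))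
        = ∑ y, (β * (σ x y * Real.log (Z x))
          - β * (σ x y * Real.log (σ x y / piStar πref r β x y))) :=
      Finset.sum_congr rfl (fun y _ => hterm y)
    rw [Finset.sum_sub_distrib, Finset.sum_sub_distrib] at this
    rw [← Finset.mul_sum, ← Finset.mul_sum, ← Finset.mul_sum] at this
    rw [← Finset.sum_mul, hσ1 x, one_mul] at this
    unfold KLdiv
    linarith
  have hKL0 : ∀ x, KLdiv (piStar πref r β x) (piStar πref r β x) = 0 := by
    intro x
    unfold KLdiv
    apply Finset.sum_eq_zero
    intro y _
    rw [div_self (ne_of_gt (hstar_pos x y)), Real.log_one, mul_zero]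
  unfold G
  apply Finset.sum_le_sum
  intro x _
  apply mul_le_mul_of_nonneg_left _ (hρ_nonneg x)
  rw [key π hπ_nonneg hπ_sum x, key (piStar πref r β) (fun x y => (hstar_pos x y).le) hstar_sum x,
    hKL0]
  have hKLnn : 0 ≤ KLdiv (π x) (piStar πref r β x) :=
    KLdiv_nonneg _ _ (hπ_nonneg x) (hstar_pos x) (hπ_sum x) (hstar_sum x)
  nlinarith
end
end

section
/- (Unique global minimizer of the off-policy loss) Let μ be a full-support behavior policy and for a full-support policy π define L_μ(π) = (1/2)·Σ_x ρ(x)·Var_{y∼μ(·|x)}(R^π_β(x,·)). Then L_μ(π) ≥ 0 for all full-support π, L_μ(π*) = 0, and if L_μ(π) = 0 for a full-support policy π, then π(·|x) = π*(·|x) for every x with ρ(x) > 0. -/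
open Finset

noncomputable section

/-- The regularized reward `R^π_β(x,y)`. -/
def Rreg {X Y : Type*} (πref r : X → Y → ℝ) (β : ℝ) (π : X → Y → ℝ) (x : X) (y : Y) : ℝ :=
  r x y - β * Real.log (π x y / πref x y)

/-- Variance of `f` under the distribution `μ` on a finite type. -/
def Var {Y : Type*} [Fintype Y] (μ : Y → ℝ) (f : Y → ℝ) : ℝ :=
  ∑ y, μ y * (f y - ∑ y', μ y' * f y') ^ 2

/-- Off-policy loss `L_μ(π)`. -/
def Lmu {X Y : Type*} [Fintype X] [Fintype Y] (ρ : X → ℝ) (πref r : X → Y → ℝ) (β : ℝ)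
    (μ π : X → Y → ℝ) : ℝ :=
  (1 / 2) * ∑ x, ρ x * Var (μ x) (Rreg πref r β π x)

/-!
The loss is a `ρ`-weighted sum of variances, hence nonnegative. The regularized reward of `π*`
is `β · log Z(x)`, where `Z(x) = ∑ y, π_ref(y|x) · exp (r(x, y) / β)` is its normalizer; it is
constant in `y`, so every variance vanishes at `π*`. Conversely, a zero
variance under a full-support `μ` forces `R^π_β(x, ·)` to be constant, i.e.
`π(·|x) ∝ π_ref(·|x) · exp (r(x, ·) / β)`, and normalization pins the constant down to `1 / Z(x)`.
-/

section Variance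

variable {Y : Type*} [Fintype Y] {μ f : Y → ℝ}

lemma var_nonneg (hμ : ∀ y, 0 ≤ μ y) (f : Y → ℝ) : 0 ≤ Var μ f :=
  sum_nonneg fun y _ => mul_nonneg (hμ y) (sq_nonneg _)

lemma var_eq_zero_of_forall_eq (hμ : ∑ y, μ y = 1) {c : ℝ} (hf : ∀ y, f y = c) :
    Var μ f = 0 := by
  have hmean : ∑ y, μ y * f y = c := by simp only [hf, ← sum_mul, hμ, one_mul]
  rw [Var, hmean]
  simp [hf]

lemma eq_mean_of_var_eq_zero (hμ : ∀ y, 0 < μ y) (h : Var μ f = 0) (y : Y) :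
    f y = ∑ y', μ y' * f y' := by
  have hy := (sum_eq_zero_iff_of_nonneg fun y _ => mul_nonneg (hμ y).le (sq_nonneg _)).mp h y
    (mem_univ y)
  have hsq := (mul_eq_zero.mp hy).resolve_left (hμ y).ne'
  exact sub_eq_zero.mp (pow_eq_zero_iff two_ne_zero |>.mp hsq)

end Variance

lemma eq_div_sum_of_eq_const_mul {Y : Type*} [Fintype Y] {p w : Y → ℝ} {k : ℝ}
    (hp : ∀ y, p y = k * w y) (hsum : ∑ y, p y = 1) (y : Y) : p y = w y / ∑ y', w y' := by
  have hk : k * ∑ y', w y' = 1 := by rw [mul_sum, ← hsum]; simp only [hp]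
  rw [hp, eq_div_iff (right_ne_zero_of_mul_eq_one hk)]
  linear_combination w y * hk

section Policy

variable {X Y : Type*} {πref r π : X → Y → ℝ} {β : ℝ} {x : X}

lemma rreg_piStar [Fintype Y] (hβ : β ≠ 0) (hπref : ∀ y, 0 < πref x y) (y : Y) :
    Rreg πref r β (piStar πref r β) x y =
      β * Real.log (∑ y', πref x y' * Real.exp (r x y' / β)) := by
  have hZ : 0 < ∑ y', πref x y' * Real.exp (r x y' / β) :=
    sum_pos (fun y _ => mul_pos (hπref y) (Real.exp_pos _)) ⟨y, mem_univ y⟩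
  have hratio : piStar πref r β x y / πref x y =
      Real.exp (r x y / β) / ∑ y', πref x y' * Real.exp (r x y' / β) := by
    rw [piStar, div_right_comm, mul_div_cancel_left₀ _ (hπref y).ne']
  rw [Rreg, hratio, Real.log_div (Real.exp_ne_zero _) hZ.ne', Real.log_exp]
  field_simp
  ring

lemma eq_mul_exp_of_rreg_eq (hβ : β ≠ 0) {y : Y} (hπ : 0 < π x y) (hπref : 0 < πref x y)
    {c : ℝ} (h : Rreg πref r β π x y = c) :
    π x y = Real.exp (-c / β) * (πref x y * Real.exp (r x y / β)) := by
  have hlog : Real.log (π x y / πref x y) = (r x y - c) / β := by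
    rw [Rreg] at h
    field_simp
    linarith
  have hratio := Real.exp_log (div_pos hπ hπref)
  rw [hlog, sub_div, sub_eq_add_neg, Real.exp_add, ← neg_div] at hratio
  rw [eq_div_iff hπref.ne'] at hratio
  linear_combination -hratio

lemma eq_piStar_of_rreg_eq [Fintype Y] (hβ : β ≠ 0) (hπ : ∀ y, 0 < π x y)
    (hπref : ∀ y, 0 < πref x y) (hsum : ∑ y, π x y = 1) {c : ℝ} (h : ∀ y, Rreg πref r β π x y = c) (y : Y) :
    π x y = piStar πref r β x y :=
  eq_div_sum_of_eq_const_mul (fun y => eq_mul_exp_of_rreg_eq hβ (hπ y) (hπref y) (h y)) hsum y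

end Policy

section Loss

variable {X Y : Type*} [Fintype X] [Fintype Y] {ρ : X → ℝ} {πref r μ : X → Y → ℝ} {β : ℝ}

lemma lmu_nonneg (hρ : ∀ x, 0 ≤ ρ x) (hμ : ∀ x y, 0 ≤ μ x y) (π : X → Y → ℝ) :
    0 ≤ Lmu ρ πref r β μ π :=
  mul_nonneg (by norm_num) (sum_nonneg fun x _ => mul_nonneg (hρ x) (var_nonneg (hμ x) _))

lemma lmu_piStar (hβ : β ≠ 0) (hπref : ∀ x y, 0 < πref x y) (hμ : ∀ x, ∑ y, μ x y = 1) :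
    Lmu ρ πref r β μ (piStar πref r β) = 0 := by
  rw [Lmu, sum_eq_zero, mul_zero]
  intro x _
  rw [var_eq_zero_of_forall_eq (hμ x) (rreg_piStar hβ (hπref x)), mul_zero]

lemma var_eq_zero_of_lmu_eq_zero (hρ : ∀ x, 0 ≤ ρ x) (hμ : ∀ x y, 0 ≤ μ x y)
    {π : X → Y → ℝ} (h : Lmu ρ πref r β μ π = 0) {x : X} (hx : 0 < ρ x) :
    Var (μ x) (Rreg πref r β π x) = 0 := by
  have hsum : ∑ x, ρ x * Var (μ x) (Rreg πref r β π x) = 0 := by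
    rw [Lmu] at h
    linarith
  have hterm := (sum_eq_zero_iff_of_nonneg fun x _ =>
    mul_nonneg (hρ x) (var_nonneg (hμ x) _)).mp hsum x (mem_univ x)
  exact (mul_eq_zero.mp hterm).resolve_left hx.ne'

end Loss

theorem off_policy_loss_unique_global_minimizer_general
    {X Y : Type*} [Fintype X] [Fintype Y]
    (πref : X → Y → ℝ) (href_pos : ∀ x y, 0 < πref x y)
    (r : X → Y → ℝ) (β : ℝ) (hβ : 0 < β)
    (ρ : X → ℝ) (hρ_nonneg : ∀ x, 0 ≤ ρ x)
    (μ : X → Y → ℝ) (hμ_pos : ∀ x y, 0 < μ x y) (hμ_sum : ∀ x, ∑ y, μ x y = 1) :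
    (∀ π : X → Y → ℝ, (∀ x y, 0 < π x y) → (∀ x, ∑ y, π x y = 1) →
        0 ≤ Lmu ρ πref r β μ π) ∧
    Lmu ρ πref r β μ (piStar πref r β) = 0 ∧
    (∀ π : X → Y → ℝ, (∀ x y, 0 < π x y) → (∀ x, ∑ y, π x y = 1) →
        Lmu ρ πref r β μ π = 0 →
        ∀ x, 0 < ρ x → ∀ y, π x y = piStar πref r β x y) := by
  have hμ_nonneg : ∀ x y, 0 ≤ μ x y := fun x y => (hμ_pos x y).le
  refine ⟨fun π _ _ => lmu_nonneg hρ_nonneg hμ_nonneg π,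
    lmu_piStar hβ.ne' href_pos hμ_sum, ?_⟩
  intro π hπ_pos hπ_sum hL x hρx
  have hvar := var_eq_zero_of_lmu_eq_zero hρ_nonneg hμ_nonneg hL hρx
  exact eq_piStar_of_rreg_eq hβ.ne' (hπ_pos x) (href_pos x) (hπ_sum x)
    (eq_mean_of_var_eq_zero (hμ_pos x) hvar)

/-- `π*` is the unique global minimizer of the off-policy loss. -/
theorem off_policy_loss_unique_global_minimizer
    {X Y : Type*} [Fintype X] [Fintype Y] [Nonempty X] [Nonempty Y]
    (πref : X → Y → ℝ) (href_pos : ∀ x y, 0 < πref x y)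
    (href_sum : ∀ x, ∑ y, πref x y = 1)
    (r : X → Y → ℝ) (β : ℝ) (hβ : 0 < β)
    (ρ : X → ℝ) (hρ_nonneg : ∀ x, 0 ≤ ρ x) (hρ_sum : ∑ x, ρ x = 1)
    (μ : X → Y → ℝ) (hμ_pos : ∀ x y, 0 < μ x y) (hμ_sum : ∀ x, ∑ y, μ x y = 1) :
    (∀ π : X → Y → ℝ, (∀ x y, 0 < π x y) → (∀ x, ∑ y, π x y = 1) →
        0 ≤ Lmu ρ πref r β μ π) ∧
    Lmu ρ πref r β μ (piStar πref r β) = 0 ∧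
    (∀ π : X → Y → ℝ, (∀ x y, 0 < π x y) → (∀ x, ∑ y, π x y = 1) →
        Lmu ρ πref r β μ π = 0 →
        ∀ x, 0 < ρ x → ∀ y, π x y = piStar πref r β x y) :=
  off_policy_loss_unique_global_minimizer_general πref href_pos r β hβ ρ hρ_nonneg μ hμ_pos hμ_sum
end
end

section
/- For every full-support policy π, every prompt x, and every generation y: R^π_β(x,y) − Σ_{y'} π(y'|x)·R^π_β(x,y') = β·(log(π*(y|x)/π(y|x)) + KL(π(·|x), π*(·|x))). -/
open Finset

noncomputable section

/-- the centered regularized reward in terms of `π*`. -/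
theorem centered_regularized_reward_via_piStar
    {X Y : Type*} [Fintype X] [Fintype Y] [Nonempty X] [Nonempty Y]
    (πref : X → Y → ℝ) (href_pos : ∀ x y, 0 < πref x y)
    (href_sum : ∀ x, ∑ y, πref x y = 1)
    (r : X → Y → ℝ) (β : ℝ) (hβ : 0 < β)
    (π : X → Y → ℝ) (hπ_pos : ∀ x y, 0 < π x y) (hπ_sum : ∀ x, ∑ y, π x y = 1) :
    ∀ (x : X) (y : Y),
      Rreg πref r β π x y - ∑ y', π x y' * Rreg πref r β π x y'
        = β * (Real.log (piStar πref r β x y / π x y)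
            + KLdiv (π x) (piStar πref r β x)) := by
  intro x y
  set Z : ℝ := ∑ y', πref x y' * Real.exp (r x y' / β) with hZ
  have hZpos : 0 < Z := Finset.sum_pos
    (fun y' _ => mul_pos (href_pos x y') (Real.exp_pos _)) Finset.univ_nonempty
  have hps : ∀ y', piStar πref r β x y' = πref x y' * Real.exp (r x y' / β) / Z :=
    fun _ => rfl
  have hstar_pos : ∀ y', 0 < piStar πref r β x y' := fun y' => by
    rw [hps]; exact div_pos (mul_pos (href_pos x y') (Real.exp_pos _)) hZpos
  have key : ∀ y', β * Real.log (piStar πref r β x y' / π x y')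
      = Rreg πref r β π x y' - β * Real.log Z := by
    intro y'
    rw [hps, Rreg, div_div,
      Real.log_div (mul_ne_zero (href_pos x y').ne' (Real.exp_pos _).ne') (mul_ne_zero hZpos.ne' (hπ_pos x y').ne'),
      Real.log_mul (href_pos x y').ne' (Real.exp_pos _).ne',
      Real.log_mul hZpos.ne' (hπ_pos x y').ne',
      Real.log_exp,
      Real.log_div (hπ_pos x y').ne' (href_pos x y').ne']
    field_simp
    ring
  have hKL : KLdiv (π x) (piStar πref r β x)
      = Real.log Z - (∑ y', π x y' * Rreg πref r β π x y') / β := by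
    unfold KLdiv
    have hterm : ∀ y', π x y' * Real.log (π x y' / piStar πref r β x y')
        = π x y' * Real.log Z - π x y' * Rreg πref r β π x y' / β := by
      intro y'
      have hl : Real.log (π x y' / piStar πref r β x y')
          = - Real.log (piStar πref r β x y' / π x y') := by
        rw [← Real.log_inv, inv_div]
      have hk : Real.log (piStar πref r β x y' / π x y')
          = (Rreg πref r β π x y' - β * Real.log Z) / β := by
        have := key y'
        field_simp
        linarith
      rw [hl, hk]
      field_simp
      ring
    rw [Finset.sum_congr rfl (fun y' _ => hterm y'), Finset.sum_sub_distrib,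
      ← Finset.sum_mul, hπ_sum, ← Finset.sum_div]
    ring
  rw [hKL]
  have hk := key y
  field_simp
  linarith
end
end

section
/- (Equivalence between KL divergence to the optimal policy and regularized performance) For every full-support policy π: β·Σ_x ρ(x)·KL(π(·|x), π*(·|x)) = G(π*) − G(π). -/
open Finset

noncomputable section

lemma perx {X Y : Type*} [Fintype Y] [Nonempty Y]
    (πref r : X → Y → ℝ) (β : ℝ) (hβ : 0 < β) (x : X)
    (hpos : ∀ y, 0 < πref x y)
    (π : Y → ℝ) (hπ : ∀ y, 0 < π y) (hsum : ∑ y, π y = 1) :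
    β * KLdiv π (piStar πref r β x)
      = ((∑ y, piStar πref r β x y * r x y) - β * KLdiv (piStar πref r β x) (πref x))
        - ((∑ y, π y * r x y) - β * KLdiv π (πref x)) := by
  set Z := ∑ y', πref x y' * Real.exp (r x y' / β) with hZdef
  have hZ : 0 < Z := Finset.sum_pos (fun y _ => mul_pos (hpos y) (Real.exp_pos _)) ⟨Classical.arbitrary Y, Finset.mem_univ _⟩
  have hstar : ∀ y, piStar πref r β x y = πref x y * Real.exp (r x y / β) / Z := fun y => rfl
  have hstar_sum : ∑ y, piStar πref r β x y = 1 := by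
    simp only [hstar, ← Finset.sum_div]
    exact div_self hZ.ne'
  have hlogstar : ∀ y, Real.log (piStar πref r β x y / πref x y) = r x y / β - Real.log Z := by
    intro y
    rw [hstar]
    have h1 : πref x y * Real.exp (r x y / β) / Z / πref x y = Real.exp (r x y / β) / Z := by
      rw [div_right_comm, mul_div_cancel_left₀ _ (hpos y).ne']
    rw [h1, Real.log_div (Real.exp_pos _).ne' hZ.ne', Real.log_exp]
  have hlogpi : ∀ y, Real.log (π y / piStar πref r β x y)
      = Real.log (π y / πref x y) - (r x y / β) + Real.log Z := by
    intro y
    rw [hstar, Real.log_div (hπ y).ne' (div_pos (mul_pos (hpos y) (Real.exp_pos _)) hZ).ne',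
        Real.log_div (mul_pos (hpos y) (Real.exp_pos _)).ne' hZ.ne',
        Real.log_mul (hpos y).ne' (Real.exp_pos _).ne', Real.log_exp,
        Real.log_div (hπ y).ne' (hpos y).ne']
    ring
  have e1 : KLdiv π (piStar πref r β x) = KLdiv π (πref x) - (∑ y, π y * r x y) / β + Real.log Z := by
    simp only [KLdiv, hlogpi, mul_sub, mul_add, Finset.sum_sub_distrib, Finset.sum_add_distrib]
    rw [← Finset.sum_mul, hsum, one_mul]
    have h2 : ∑ y, π y * (r x y / β) = (∑ y, π y * r x y) / β := by
      rw [Finset.sum_div]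
      exact Finset.sum_congr rfl fun y _ => by ring
    rw [h2]
  have e2 : KLdiv (piStar πref r β x) (πref x) = (∑ y, piStar πref r β x y * r x y) / β - Real.log Z := by
    simp only [KLdiv, hlogstar, mul_sub, Finset.sum_sub_distrib]
    rw [← Finset.sum_mul, hstar_sum, one_mul, Finset.sum_div]
    congr 1
    exact Finset.sum_congr rfl fun y _ => by ring
  rw [e1, e2]
  field_simp
  ring

/-- equivalence between the KL divergence to the optimal policy and the
suboptimality in regularized performance. -/
theorem KL_to_piStar_eq_performance_gap
    {X Y : Type*} [Fintype X] [Fintype Y] [Nonempty X] [Nonempty Y]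
    (πref : X → Y → ℝ) (href_pos : ∀ x y, 0 < πref x y)
    (href_sum : ∀ x, ∑ y, πref x y = 1)
    (r : X → Y → ℝ) (β : ℝ) (hβ : 0 < β)
    (ρ : X → ℝ) (hρ_nonneg : ∀ x, 0 ≤ ρ x) (hρ_sum : ∑ x, ρ x = 1)
    (π : X → Y → ℝ) (hπ_pos : ∀ x y, 0 < π x y) (hπ_sum : ∀ x, ∑ y, π x y = 1) :
    β * ∑ x, ρ x * KLdiv (π x) (piStar πref r β x)
      = G ρ πref r β (piStar πref r β) - G ρ πref r β π := by
  unfold G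
  rw [← Finset.sum_sub_distrib, Finset.mul_sum]
  refine Finset.sum_congr rfl fun x _ => ?_
  rw [← mul_sub, ← mul_assoc, mul_comm β (ρ x), mul_assoc,
      perx πref r β hβ x (href_pos x) (π x) (hπ_pos x) (hπ_sum x)]
end
end

section
/- (Lower-triangular cross terms vanish) Suppose each conditional probability θ ↦ π_θ(v | y₁,…,y_{t−1}) is Fréchet differentiable at θ₀ and write π = π_{θ₀}. For all time indices t' < t in {1,…,T}: Σ_{y∈V^T} π(y) · log(π(y_{t'} | y_{1:t'−1}) / π_ref(y_{t'} | y_{1:t'−1})) · D_θ[log π_θ(y_t | y_{1:t−1})](θ₀) = 0, where π(y) = Π_{s=1}^T π(y_s | y_{1:s−1}) is the sequence probability. -/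
/-!
Only the factor `D_θ log π_θ(y_t | y_{1:t-1})` involves `y_t`, and everything else in the
summand depends on `y` through `y_{1:t-1}` alone (as `t' < t`). Summing out `y_{t+1}, …, y_T`
leaves the marginal of `y_{1:t}`, and the remaining sum over `y_t` is the expected score at
the prefix `p = y_{1:t-1}`, `∑_v π(v | p) D_θ log π_θ(v | p) = D_θ ∑_v π_θ(v | p) = D_θ 1 = 0`.
-/

open Finset

noncomputable section

/-- Sequence probability of an autoregressive policy given by its conditionals:
`π(y) = ∏_{s=1}^T π(y_s | y_{1:s-1})`. -/
def seqP {V : Type*} [Fintype V] {T : ℕ} (cond : List V → V → ℝ) (y : Fin T → V) : ℝ :=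
  ∏ s : Fin T, cond ((List.ofFn y).take s.1) (y s)

theorem List.ofFn_snoc {α : Type*} {n : ℕ} (p : Fin n → α) (a : α) :
    List.ofFn (Fin.snoc p a : Fin (n + 1) → α) = List.ofFn p ++ [a] := by
  rw [List.ofFn_succ_last]
  simp

theorem Fin.sum_univ_pi_snoc {α M : Type*} [Fintype α] [AddCommMonoid M] {n : ℕ}
    (f : (Fin (n + 1) → α) → M) :
    ∑ y, f y = ∑ p : Fin n → α, ∑ a, f (Fin.snoc p a) := by
  rw [← (Fin.snocEquiv fun _ => α).sum_comp, Fintype.sum_prod_type, Finset.sum_comm]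
  rfl

theorem sum_smul_fderiv_log_eq_zero {ι Θ : Type*} [Fintype ι]
    [NormedAddCommGroup Θ] [NormedSpace ℝ Θ] (f : Θ → ι → ℝ) (θ₀ : Θ)
    (hne : ∀ i, f θ₀ i ≠ 0) (hsum : ∀ θ, ∑ i, f θ i = 1)
    (hdiff : ∀ i, DifferentiableAt ℝ (fun θ => f θ i) θ₀) :
    ∑ i, f θ₀ i • fderiv ℝ (fun θ => Real.log (f θ i)) θ₀ = 0 := by
  have hlog : ∀ i, f θ₀ i • fderiv ℝ (fun θ => Real.log (f θ i)) θ₀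
      = fderiv ℝ (fun θ => f θ i) θ₀ := fun i => by
    rw [fderiv.log (hdiff i) (hne i), smul_smul, mul_inv_cancel₀ (hne i), one_smul]
  simp_rw [hlog, ← fderiv_fun_sum fun i _ => hdiff i, hsum, fderiv_const_apply]

section Marginal

variable {V : Type*} [Fintype V] (cond : List V → V → ℝ)

theorem seqP_snoc {n : ℕ} (p : Fin n → V) (v : V) :
    seqP cond (Fin.snoc p v) = seqP cond p * cond (List.ofFn p) v := by
  have htake : ∀ k ≤ n, (List.ofFn (Fin.snoc p v : Fin (n + 1) → V)).take k
      = (List.ofFn p).take k := fun k hk => by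
    rw [List.ofFn_snoc, List.take_append_of_le_length (by simpa using hk)]
  unfold seqP
  rw [Fin.prod_univ_castSucc, Fin.val_last, htake n le_rfl, Fin.snoc_last,
    List.take_of_length_le (by simp)]
  congr 1
  refine Finset.prod_congr rfl fun s _ => ?_
  rw [Fin.snoc_castSucc, Fin.val_castSucc, htake s s.2.le]

variable {E : Type*} [AddCommMonoid E] [Module ℝ E]
  (hsum : ∀ p, ∑ v, cond p v = 1)
include hsum

theorem sum_seqP_smul_init {n : ℕ} (G : (Fin n → V) → E) :
    ∑ y : Fin (n + 1) → V, seqP cond y • G (Fin.init y) = ∑ p : Fin n → V, seqP cond p • G p := by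
  rw [Fin.sum_univ_pi_snoc]
  refine Finset.sum_congr rfl fun p _ => ?_
  simp_rw [Fin.init_snoc, seqP_snoc, ← Finset.sum_smul, ← Finset.mul_sum, hsum, mul_one]

theorem sum_seqP_smul_take {k n : ℕ} (hk : k ≤ n) (G : (Fin k → V) → E) :
    ∑ y : Fin n → V, seqP cond y • G (Fin.take k hk y) = ∑ p : Fin k → V, seqP cond p • G p := by
  induction n, hk using Nat.le_induction with
  | base => simp_rw [Fin.take_eq_self]
  | succ n hkn ih =>
    exact (sum_seqP_smul_init cond hsum _).trans ih

end Marginal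

theorem sum_seqP_mul_smul_fderiv_log_eq_zero {V : Type*} [Fintype V]
    {Θ : Type*} [NormedAddCommGroup Θ] [NormedSpace ℝ Θ] (πθ : Θ → List V → V → ℝ)
    (θ₀ : Θ) (hne : ∀ p v, πθ θ₀ p v ≠ 0) (hsum : ∀ θ p, ∑ v, πθ θ p v = 1)
    (hdiff : ∀ p v, DifferentiableAt ℝ (fun θ => πθ θ p v) θ₀)
    {n t : ℕ} (ht : t < n) (C : (Fin t → V) → ℝ) :
    ∑ y : Fin n → V, (seqP (πθ θ₀) y * C (Fin.take t ht.le y)) •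
      fderiv ℝ (fun θ => Real.log (πθ θ (List.ofFn (Fin.take t ht.le y)) (y ⟨t, ht⟩))) θ₀
      = 0 := by
  set G : (Fin (t + 1) → V) → _ := fun p => C (Fin.init p) •
    fderiv ℝ (fun θ => Real.log (πθ θ (List.ofFn (Fin.init p)) (p (Fin.last t)))) θ₀
  have hG : ∀ y : Fin n → V, G (Fin.take (t + 1) ht y)
      = C (Fin.take t ht.le y) •
        fderiv ℝ (fun θ => Real.log (πθ θ (List.ofFn (Fin.take t ht.le y)) (y ⟨t, ht⟩))) θ₀ :=
    fun y => by simp only [G, Fin.take_succ_eq_snoc, Fin.init_snoc, Fin.snoc_last]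
  simp_rw [mul_smul, ← hG, sum_seqP_smul_take (πθ θ₀) (hsum θ₀), Fin.sum_univ_pi_snoc]
  refine Finset.sum_eq_zero fun p _ => ?_
  simp only [G, Fin.init_snoc, Fin.snoc_last, seqP_snoc, mul_smul, ← Finset.smul_sum]
  simp_rw [smul_comm (πθ θ₀ _ _) (C p), ← Finset.smul_sum,
    sum_smul_fderiv_log_eq_zero (πθ · (List.ofFn p)) θ₀ (hne _)
      (fun θ => hsum θ _) (hdiff _), smul_zero]

theorem lower_triangular_cross_terms_vanish_general
    {V : Type*} [Fintype V] {T : ℕ}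
    {Θ : Type*} [NormedAddCommGroup Θ] [NormedSpace ℝ Θ]
    (πref : List V → V → ℝ)
    (πθ : Θ → List V → V → ℝ)
    (hpos : ∀ θ p v, 0 < πθ θ p v) (hsum : ∀ θ p, ∑ v, πθ θ p v = 1)
    (θ₀ : Θ) (hdiff : ∀ p v, DifferentiableAt ℝ (fun θ => πθ θ p v) θ₀)
    (t' t : Fin T) (htt : t' < t) :
    ∑ y : Fin T → V,
      (seqP (πθ θ₀) y *
        Real.log (πθ θ₀ ((List.ofFn y).take t'.1) (y t')
          / πref ((List.ofFn y).take t'.1) (y t'))) •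
        fderiv ℝ (fun θ => Real.log (πθ θ ((List.ofFn y).take t.1) (y t))) θ₀
      = 0 := by
  have hprefix : ∀ y : Fin T → V, (List.ofFn y).take t'.1
      = List.ofFn (Fin.take t'.1 htt.le (Fin.take t.1 t.2.le y)) := fun y => by
    rw [Fin.take_take, Fin.ofFn_take_eq_take_ofFn]
  have htoken : ∀ y : Fin T → V, y t' = Fin.take t.1 t.2.le y ⟨t', htt⟩ := fun y => rfl
  simp_rw [hprefix, htoken, ← Fin.ofFn_take_eq_take_ofFn t.2.le]
  exact sum_seqP_mul_smul_fderiv_log_eq_zero πθ θ₀ (fun p v => (hpos θ₀ p v).ne') hsum hdiff t.2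
    fun q => Real.log (πθ θ₀ (List.ofFn (Fin.take t'.1 htt.le q)) (q ⟨t', htt⟩)
      / πref (List.ofFn (Fin.take t'.1 htt.le q)) (q ⟨t', htt⟩))

/-- lower-triangular cross terms vanish, for `t' < t`. -/
theorem lower_triangular_cross_terms_vanish
    {V : Type*} [Fintype V] [Nonempty V] {T : ℕ} (hT : 1 ≤ T)
    {Θ : Type*} [NormedAddCommGroup Θ] [NormedSpace ℝ Θ]
    (πref : List V → V → ℝ) (href_pos : ∀ p v, 0 < πref p v)
    (href_sum : ∀ p, ∑ v, πref p v = 1)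
    (πθ : Θ → List V → V → ℝ)
    (hpos : ∀ θ p v, 0 < πθ θ p v) (hsum : ∀ θ p, ∑ v, πθ θ p v = 1)
    (θ₀ : Θ) (hdiff : ∀ p v, DifferentiableAt ℝ (fun θ => πθ θ p v) θ₀)
    (t' t : Fin T) (htt : t' < t) :
    ∑ y : Fin T → V,
      (seqP (πθ θ₀) y *
        Real.log (πθ θ₀ ((List.ofFn y).take t'.1) (y t')
          / πref ((List.ofFn y).take t'.1) (y t'))) •
        fderiv ℝ (fun θ => Real.log (πθ θ ((List.ofFn y).take t.1) (y t))) θ₀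
      = 0 :=
  lower_triangular_cross_terms_vanish_general πref πθ hpos hsum θ₀ hdiff t' t htt
end
end

section
/- (Upper cross terms reduce to conditional KL) Suppose each conditional probability θ ↦ π_θ(v | y₁,…,y_{t−1}) is Fréchet differentiable at θ₀ and write π = π_{θ₀}. For all time indices t < t' in {1,…,T}: Σ_{y∈V^T} π(y) · D_θ[log π_θ(y_t | y_{1:t−1})](θ₀) · log(π(y_{t'} | y_{1:t'−1}) / π_ref(y_{t'} | y_{1:t'−1})) = Σ_{y∈V^T} π(y) · D_θ[log π_θ(y_t | y_{1:t−1})](θ₀) · KL(π(· | y_{1:t'−1}), π_ref(· | y_{1:t'−1})), where KL(p,q) = Σ_{v∈V} p(v)·log(p(v)/q(v)) and π(y) = Π_{s=1}^T π(y_s | y_{1:s−1}). -/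
/-! The score factor `D_θ log π_θ(y_t | y_{1:t-1})` depends only on tokens before `t'`, so by the
tower property the log-ratio at `t'` may be replaced by its conditional expectation given
`y_{1:t'-1}`, which is the token-level KL. The tower property is proved by summing out the tokens
one position at a time from `t'` on: letting the token at position `m` range over `V` multiplies a
sum by `card V` and turns the factor `π(y_m | y_{1:m-1})` of the prefix probability into a
conditional expectation over that token, which is trivial for functions of earlier tokens only. -/

open Finset

noncomputable section

/-- Token-level KL divergence between two distributions over the next token. -/
def KLtok {V : Type*} [Fintype V] (p q : V → ℝ) : ℝ :=
  ∑ v, p v * Real.log (p v / q v)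

theorem sum_sum_update_eq_card_smul {ι V E : Type*} [DecidableEq ι] [Fintype ι] [Fintype V]
    [AddCommMonoid E] (f : (ι → V) → E) (i : ι) :
    ∑ y : ι → V, ∑ v : V, f (Function.update y i v) = Fintype.card V • ∑ y : ι → V, f y := by
  have hinv : Function.Involutive fun p : (ι → V) × V => (Function.update p.1 i p.2, p.1 i) :=
    fun p => Prod.ext (by simp) (by simp)
  calc ∑ y : ι → V, ∑ v : V, f (Function.update y i v)
      = ∑ p : (ι → V) × V, f (Function.update p.1 i p.2) := by rw [Fintype.sum_prod_type]
    _ = ∑ p : (ι → V) × V, f p.1 := Fintype.sum_bijective _ hinv.bijective _ _ fun _ => rfl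
    _ = Fintype.card V • ∑ y : ι → V, f y := by
        simp only [Fintype.sum_prod_type, sum_const, card_univ, smul_sum]

section Autoregressive

variable {V : Type*} {T : ℕ}

theorem take_ofFn_update (y : Fin T → V) {j : Fin T} (v : V) {k : ℕ} (hk : k ≤ j) :
    (List.ofFn (Function.update y j v)).take k = (List.ofFn y).take k := by
  have hkT : k ≤ T := hk.trans j.2.le
  rw [← Fin.ofFn_take_eq_take_ofFn hkT, ← Fin.ofFn_take_eq_take_ofFn hkT,
    Fin.take_update_of_ge _ _ _ _ hk]

theorem apply_take_ofFn_update_of_lt {X : Type*} (g : List V → V → X) (y : Fin T → V)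
    {t j : Fin T} (htj : t < j) (v : V) :
    g ((List.ofFn (Function.update y j v)).take t) (Function.update y j v t)
      = g ((List.ofFn y).take t) (y t) := by
  rw [take_ofFn_update _ _ htj.le, Function.update_of_ne htj.ne]

def prefixSeqP (cond : List V → V → ℝ) (m : ℕ) (y : Fin T → V) : ℝ :=
  ∏ s : Fin T with s.1 < m, cond ((List.ofFn y).take s.1) (y s)

theorem prefixSeqP_update (cond : List V → V → ℝ) {m : ℕ} (y : Fin T → V) {j : Fin T}
    (hj : m ≤ j) (v : V) : prefixSeqP cond m (Function.update y j v) = prefixSeqP cond m y := by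
  refine prod_congr rfl fun s hs => ?_
  have hsj : s.1 < j := (mem_filter.mp hs).2.trans_le hj
  rw [take_ofFn_update _ _ hsj.le, Function.update_of_ne (Fin.ne_of_lt hsj)]

theorem prefixSeqP_succ (cond : List V → V → ℝ) {m : ℕ} (hm : m < T) (y : Fin T → V) :
    prefixSeqP cond (m + 1) y = prefixSeqP cond m y * cond ((List.ofFn y).take m) (y ⟨m, hm⟩) := by
  have hfilter : ({s : Fin T | s.1 < m + 1} : Finset (Fin T))
      = insert ⟨m, hm⟩ ({s : Fin T | s.1 < m} : Finset (Fin T)) := by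
    ext s; simp [Fin.ext_iff]; omega
  rw [prefixSeqP, hfilter, prod_insert (by simp), mul_comm]
  rfl

theorem prefixSeqP_self [Fintype V] (cond : List V → V → ℝ) (y : Fin T → V) :
    prefixSeqP cond T y = seqP cond y := by
  rw [prefixSeqP, filter_true_of_mem fun s _ => s.2, seqP]

variable [Fintype V] {E : Type*} [AddCommGroup E] [Module ℝ E]

def condExpAt (cond : List V → V → ℝ) (t : Fin T) (Φ : (Fin T → V) → E) (y : Fin T → V) : E :=
  ∑ v, cond ((List.ofFn y).take t) v • Φ (Function.update y t v)

theorem condExpAt_update_self (cond : List V → V → ℝ) (t : Fin T) (Φ : (Fin T → V) → E)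
    (y : Fin T → V) (v : V) : condExpAt cond t Φ (Function.update y t v) = condExpAt cond t Φ y := by
  simp only [condExpAt, take_ofFn_update _ _ le_rfl, Function.update_idem]

theorem condExpAt_update_of_lt (cond : List V → V → ℝ) {t j : Fin T} (htj : t < j)
    {Φ : (Fin T → V) → E} (hΦ : ∀ y v, Φ (Function.update y j v) = Φ y) (y : Fin T → V) (v : V) :
    condExpAt cond t Φ (Function.update y j v) = condExpAt cond t Φ y := by
  simp only [condExpAt, take_ofFn_update _ _ htj.le, Function.update_comm htj.ne', hΦ]

theorem card_smul_sum_prefixSeqP_succ_smul (cond : List V → V → ℝ) {m : ℕ} (hm : m < T)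
    (Φ : (Fin T → V) → E) :
    Fintype.card V • ∑ y, prefixSeqP cond (m + 1) y • Φ y
      = ∑ y, prefixSeqP cond m y • condExpAt cond ⟨m, hm⟩ Φ y := by
  rw [← sum_sum_update_eq_card_smul _ ⟨m, hm⟩]
  refine sum_congr rfl fun y _ => ?_
  rw [condExpAt, smul_sum]
  refine sum_congr rfl fun v _ => ?_
  rw [prefixSeqP_succ cond hm, prefixSeqP_update cond _ (j := ⟨m, hm⟩) le_rfl,
    take_ofFn_update _ (j := ⟨m, hm⟩) _ le_rfl, Function.update_self, smul_smul]

theorem sum_seqP_smul_eq_zero [Nonempty V] (cond : List V → V → ℝ)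
    (hsum : ∀ p, ∑ v, cond p v = 1) (t : Fin T) (Φ : (Fin T → V) → E)
    (hΦ : ∀ y (j : Fin T), t < j → ∀ v, Φ (Function.update y j v) = Φ y)
    (hcond : ∀ y, condExpAt cond t Φ y = 0) :
    ∑ y, seqP cond y • Φ y = 0 := by
  have hcard : (Fintype.card V : ℝ) ≠ 0 := Nat.cast_ne_zero.mpr Fintype.card_ne_zero
  have cancel_card {x : E} (h : Fintype.card V • x = 0) : x = 0 := by
    rwa [← Nat.cast_smul_eq_nsmul ℝ, smul_eq_zero, or_iff_right hcard] at h
  suffices ∀ m, t.1 + 1 ≤ m → m ≤ T → ∑ y, prefixSeqP cond m y • Φ y = 0 by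
    simpa only [prefixSeqP_self] using this T t.2 le_rfl
  intro m hm
  induction m, hm using Nat.le_induction with
  | base =>
    intro _
    refine cancel_card ?_
    rw [card_smul_sum_prefixSeqP_succ_smul cond t.2]
    exact sum_eq_zero fun y _ => by rw [hcond y, smul_zero]
  | succ m htm ih =>
    intro hmT
    refine cancel_card ?_
    rw [card_smul_sum_prefixSeqP_succ_smul cond hmT, ← ih (Nat.le_of_succ_le hmT)]
    refine sum_congr rfl fun y _ => ?_
    simp only [condExpAt, hΦ y ⟨m, hmT⟩ htm, ← sum_smul, hsum, one_smul]

theorem sum_seqP_smul_condExpAt [Nonempty V] (cond : List V → V → ℝ)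
    (hsum : ∀ p, ∑ v, cond p v = 1) (t : Fin T) (Φ : (Fin T → V) → E)
    (hΦ : ∀ y (j : Fin T), t < j → ∀ v, Φ (Function.update y j v) = Φ y) :
    ∑ y, seqP cond y • condExpAt cond t Φ y = ∑ y, seqP cond y • Φ y := by
  rw [eq_comm, ← sub_eq_zero, ← sum_sub_distrib]
  simp_rw [← smul_sub]
  refine sum_seqP_smul_eq_zero cond hsum t _ (fun y j htj v => ?_) fun y => ?_
  · rw [hΦ y j htj, condExpAt_update_of_lt cond htj (fun y v => hΦ y j htj v)]
  · rw [condExpAt]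
    simp_rw [condExpAt_update_self, smul_sub, sum_sub_distrib, ← sum_smul, hsum, one_smul]
    exact sub_self _

theorem sum_seqP_smul_smul_of_lt [Nonempty V] (cond : List V → V → ℝ)
    (hsum : ∀ p, ∑ v, cond p v = 1) (f : List V → V → ℝ) (g : List V → V → E) {t t' : Fin T}
    (htt : t < t') :
    ∑ y, seqP cond y • f ((List.ofFn y).take t') (y t') • g ((List.ofFn y).take t) (y t)
      = ∑ y, seqP cond y • (∑ v, cond ((List.ofFn y).take t') v * f ((List.ofFn y).take t') v) •
          g ((List.ofFn y).take t) (y t) := by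
  rw [← sum_seqP_smul_condExpAt cond hsum t' _ fun y j htj v => by
    rw [apply_take_ofFn_update_of_lt f y htj, apply_take_ofFn_update_of_lt g y (htt.trans htj)]]
  refine sum_congr rfl fun y _ => congrArg _ ?_
  have hprefix : ∀ v, (List.ofFn (Function.update y t' v)).take t' = (List.ofFn y).take t' :=
    fun v => take_ofFn_update y v le_rfl
  simp_rw [condExpAt, apply_take_ofFn_update_of_lt g y htt, hprefix, Function.update_self,
    smul_smul, ← sum_smul]

end Autoregressive

theorem upper_cross_terms_reduce_to_conditional_KL_general
    {V : Type*} [Fintype V] [Nonempty V] {T : ℕ}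
    {Θ : Type*} [NormedAddCommGroup Θ] [NormedSpace ℝ Θ]
    (πref : List V → V → ℝ)
    (πθ : Θ → List V → V → ℝ)
    (hsum : ∀ θ p, ∑ v, πθ θ p v = 1)
    (θ₀ : Θ)
    (t t' : Fin T) (htt : t < t') :
    (∑ y : Fin T → V,
      (seqP (πθ θ₀) y *
        Real.log (πθ θ₀ ((List.ofFn y).take t'.1) (y t')
          / πref ((List.ofFn y).take t'.1) (y t'))) •
        fderiv ℝ (fun θ => Real.log (πθ θ ((List.ofFn y).take t.1) (y t))) θ₀)
    = (∑ y : Fin T → V,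
      (seqP (πθ θ₀) y *
        KLtok (πθ θ₀ ((List.ofFn y).take t'.1)) (πref ((List.ofFn y).take t'.1))) •
        fderiv ℝ (fun θ => Real.log (πθ θ ((List.ofFn y).take t.1) (y t))) θ₀) := by
  simp_rw [← smul_smul]
  exact sum_seqP_smul_smul_of_lt (πθ θ₀) (hsum θ₀) (fun p v => Real.log (πθ θ₀ p v / πref p v))
    (fun p v => fderiv ℝ (fun θ => Real.log (πθ θ p v)) θ₀) htt

/-- upper cross terms reduce to the conditional (token-level) KL, for `t < t'`. -/
theorem upper_cross_terms_reduce_to_conditional_KL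
    {V : Type*} [Fintype V] [Nonempty V] {T : ℕ} (hT : 1 ≤ T)
    {Θ : Type*} [NormedAddCommGroup Θ] [NormedSpace ℝ Θ]
    (πref : List V → V → ℝ) (href_pos : ∀ p v, 0 < πref p v)
    (href_sum : ∀ p, ∑ v, πref p v = 1)
    (πθ : Θ → List V → V → ℝ)
    (hpos : ∀ θ p v, 0 < πθ θ p v) (hsum : ∀ θ p, ∑ v, πθ θ p v = 1)
    (θ₀ : Θ) (hdiff : ∀ p v, DifferentiableAt ℝ (fun θ => πθ θ p v) θ₀)
    (t t' : Fin T) (htt : t < t') :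
    (∑ y : Fin T → V,
      (seqP (πθ θ₀) y *
        Real.log (πθ θ₀ ((List.ofFn y).take t'.1) (y t')
          / πref ((List.ofFn y).take t'.1) (y t'))) •
        fderiv ℝ (fun θ => Real.log (πθ θ ((List.ofFn y).take t.1) (y t))) θ₀)
    = (∑ y : Fin T → V,
      (seqP (πθ θ₀) y *
        KLtok (πθ θ₀ ((List.ofFn y).take t'.1)) (πref ((List.ofFn y).take t'.1))) •
        fderiv ℝ (fun θ => Real.log (πθ θ ((List.ofFn y).take t.1) (y t))) θ₀) :=
  upper_cross_terms_reduce_to_conditional_KL_general πref πθ hsum θ₀ t t' htt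
end
end

section
/- (Token-level generation consistency at optimality) Define for a prefix y_{1:t} the regularized value Ṽ(y_{1:t}) = β·log( Σ_{(z_{t+1},…,z_T)∈V^{T−t}} (Π_{s=t+1}^T π_ref(z_s | y_{1:t} z_{t+1:s−1})) · exp((1/β)·Σ_{s=t+1}^T r_s(y_{1:t} z_{t+1:s})) ), the sequence-level optimal policy π*(y) = π_ref(y)·exp((1/β)·Σ_{s=1}^T r_s(y_{1:s})) / Σ_{z∈V^T} π_ref(z)·exp((1/β)·Σ_{s=1}^T r_s(z_{1:s})), and its conditionals π*(y_s | y_{1:s−1}) = (Σ_{z∈V^T, z_{1:s}=y_{1:s}} π*(z)) / (Σ_{z∈V^T, z_{1:s−1}=y_{1:s−1}} π*(z)). Then for every sequence y ∈ V^T and all 0 ≤ t ≤ t' ≤ T: Ṽ(y_{1:t}) = Σ_{s=t+1}^{t'} ( r_s(y_{1:s}) − β·log(π*(y_s | y_{1:s−1}) / π_ref(y_s | y_{1:s−1})) ) + Ṽ(y_{1:t'}). -/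
open Finset

noncomputable section

/-- Regularized value `Ṽ(p)` of a prefix `p` (with horizon `T`):
`Ṽ(y_{1:t}) = β·log Σ_{z ∈ V^{T-t}} (∏_s π_ref(z_s | y_{1:t} z_{1:s-1})) ·
exp((1/β)·Σ_s r(y_{1:t} z_{1:s}))`. -/
def Vtil {V : Type*} [Fintype V] (πref : List V → V → ℝ) (r : List V → ℝ) (β : ℝ)
    (T : ℕ) (p : List V) : ℝ :=
  β * Real.log (∑ z : Fin (T - p.length) → V,
    (∏ k : Fin (T - p.length), πref (p ++ (List.ofFn z).take k.1) (z k)) *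
      Real.exp ((1 / β) * ∑ k : Fin (T - p.length), r (p ++ (List.ofFn z).take (k.1 + 1))))

/-- Sequence-level optimal policy `π*(y) ∝ π_ref(y)·exp((1/β)·Σ_s r_s(y_{1:s}))`. -/
def piStarSeq {V : Type*} [Fintype V] {T : ℕ} (πref : List V → V → ℝ) (r : List V → ℝ)
    (β : ℝ) (y : Fin T → V) : ℝ :=
  seqP πref y * Real.exp ((1 / β) * ∑ s : Fin T, r ((List.ofFn y).take (s.1 + 1)))
    / ∑ z : Fin T → V,
        seqP πref z * Real.exp ((1 / β) * ∑ s : Fin T, r ((List.ofFn z).take (s.1 + 1)))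

/-- Conditional `π*(y_s | y_{1:s-1})` of the sequence-level optimal policy. -/
def condStar {V : Type*} [Fintype V] [DecidableEq V] {T : ℕ} (πref : List V → V → ℝ) (r : List V → ℝ)
    (β : ℝ) (y : Fin T → V) (s : Fin T) : ℝ :=
  (∑ z ∈ Finset.univ.filter (fun z : Fin T → V =>
      (List.ofFn z).take (s.1 + 1) = (List.ofFn y).take (s.1 + 1)), piStarSeq πref r β z)
    / ∑ z ∈ Finset.univ.filter (fun z : Fin T → V =>
        (List.ofFn z).take s.1 = (List.ofFn y).take s.1), piStarSeq πref r β z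

namespace TokenGenAux

set_option linter.unusedSectionVars false
set_option maxHeartbeats 1000000 in
section
variable {V : Type*} [Fintype V] [DecidableEq V] [Nonempty V] {T : ℕ}


def phi (y : Fin T → V) (s : ℕ) (hs : s ≤ T) (w : Fin (T - s) → V) : Fin T → V :=
  fun i => if h : i.1 < s then y i else w ⟨i.1 - s, by omega⟩

lemma take_phi_le (y : Fin T → V) {s : ℕ} (hs : s ≤ T) (w : Fin (T - s) → V) {k : ℕ}
    (hk : k ≤ s) :
    (List.ofFn (phi y s hs w)).take k = (List.ofFn y).take k := by
  apply List.ext_getElem (by simp)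
  intro i h1 h2
  have hi : i < s := by simp at h1; omega
  simp [List.getElem_take, List.getElem_ofFn, phi, hi]

lemma take_phi_ge (y : Fin T → V) {s : ℕ} (hs : s ≤ T) (w : Fin (T - s) → V) {k : ℕ}
    (hk : s ≤ k) (hkT : k ≤ T) :
    (List.ofFn (phi y s hs w)).take k
      = (List.ofFn y).take s ++ (List.ofFn w).take (k - s) := by
  apply List.ext_getElem (by simp; omega)
  intro i h1 h2
  have hiT : i < T := by simp at h1; omega
  rw [List.getElem_take, List.getElem_ofFn, List.getElem_append]
  simp only [List.length_take, List.length_ofFn]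
  by_cases hi : i < s
  · rw [dif_pos (by omega), List.getElem_take, List.getElem_ofFn]
    simp only [phi]
    rw [dif_pos hi]
  · rw [dif_neg (by omega), List.getElem_take, List.getElem_ofFn]
    simp only [phi]
    rw [dif_neg hi]
    congr 1
    simp only [Fin.mk.injEq]
    omega

lemma take_eq_iff (z y : Fin T → V) {s : ℕ} (hs : s ≤ T) :
    (List.ofFn z).take s = (List.ofFn y).take s ↔ ∀ i : Fin T, i.1 < s → z i = y i := by
  constructor
  · intro h i hi
    have h2 := congrArg (fun l => l[i.1]?) h
    simp only [List.getElem?_take, List.getElem?_ofFn, List.ofFnNthVal] at h2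
    simpa [hi, i.2] using h2
  · intro h
    apply List.ext_getElem (by simp)
    intro i h1 h2
    have hi : i < s := by simp at h1; omega
    have hiT : i < T := by omega
    simp only [List.getElem_take, List.getElem_ofFn]
    exact h ⟨i, hiT⟩ hi

/-- weight of a full sequence -/
noncomputable def wt (πref : List V → V → ℝ) (r : List V → ℝ) (β : ℝ) (z : Fin T → V) : ℝ :=
  seqP πref z * Real.exp ((1 / β) * ∑ s : Fin T, r ((List.ofFn z).take (s.1 + 1)))

lemma filter_eq_image (y : Fin T → V) {s : ℕ} (hs : s ≤ T) :
    Finset.univ.filter (fun z : Fin T → V =>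
        (List.ofFn z).take s = (List.ofFn y).take s)
      = Finset.image (phi y s hs) Finset.univ := by
  ext z
  simp only [mem_filter, mem_univ, true_and, mem_image]
  constructor
  · intro h
    refine ⟨fun j => z ⟨s + j.1, by omega⟩, ?_⟩
    funext i
    by_cases hi : i.1 < s
    · have hzy := (take_eq_iff z y hs).mp h i hi
      simp only [phi, dif_pos hi]
      exact hzy.symm
    · simp only [phi, dif_neg hi]
      congr 1
      apply Fin.ext
      simp only [Fin.val_mk]
      omega
  · rintro ⟨w, rfl⟩
    exact take_phi_le y hs w le_rfl

lemma phi_inj (y : Fin T → V) {s : ℕ} (hs : s ≤ T) :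
    ∀ w ∈ (Finset.univ : Finset (Fin (T - s) → V)), ∀ w' ∈ Finset.univ,
      phi y s hs w = phi y s hs w' → w = w' := by
  intro w _ w' _ h
  funext j
  have := congrFun h ⟨s + j.1, by omega⟩
  simpa [phi, Nat.add_sub_cancel_left] using this

/-- reindexing of the tail of Fin T -/
lemma tail_filter_eq_image {s : ℕ} (hs : s ≤ T) :
    Finset.univ.filter (fun k : Fin T => ¬ k.1 < s)
      = Finset.image (fun j : Fin (T - s) => (⟨s + j.1, by omega⟩ : Fin T)) Finset.univ := by
  ext k
  simp only [mem_filter, mem_univ, true_and, mem_image]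
  constructor
  · intro h
    exact ⟨⟨k.1 - s, by omega⟩, by simp only [Fin.mk.injEq]; ext; simp; omega⟩
  · rintro ⟨j, rfl⟩
    simp

lemma filtered_sum (πref : List V → V → ℝ) (r : List V → ℝ) (β : ℝ)
    (y : Fin T → V) {s : ℕ} (hs : s ≤ T) :
    ∑ z ∈ Finset.univ.filter (fun z : Fin T → V =>
        (List.ofFn z).take s = (List.ofFn y).take s), wt πref r β z
      = ((∏ k ∈ Finset.univ.filter (fun k : Fin T => k.1 < s),
            πref ((List.ofFn y).take k.1) (y k))
          * Real.exp ((1 / β) * ∑ k ∈ Finset.univ.filter (fun k : Fin T => k.1 < s),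
              r ((List.ofFn y).take (k.1 + 1))))
        * ∑ w : Fin (T - s) → V,
            (∏ k : Fin (T - s), πref ((List.ofFn y).take s ++ (List.ofFn w).take k.1) (w k)) *
              Real.exp ((1 / β) * ∑ k : Fin (T - s),
                r ((List.ofFn y).take s ++ (List.ofFn w).take (k.1 + 1))) := by
  rw [filter_eq_image y hs, Finset.sum_image (phi_inj y hs), Finset.mul_sum]
  apply Finset.sum_congr rfl
  intro w _
  have hseq : seqP πref (phi y s hs w)
      = (∏ k ∈ Finset.univ.filter (fun k : Fin T => k.1 < s),
            πref ((List.ofFn y).take k.1) (y k))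
        * ∏ k : Fin (T - s), πref ((List.ofFn y).take s ++ (List.ofFn w).take k.1) (w k) := by
    rw [seqP, ← Finset.prod_filter_mul_prod_filter_not Finset.univ (fun k : Fin T => k.1 < s)]
    congr 1
    · apply Finset.prod_congr rfl
      intro k hk
      have hk' : k.1 < s := by simpa using hk
      rw [take_phi_le y hs w (le_of_lt hk')]
      simp [phi, hk']
    · rw [tail_filter_eq_image hs, Finset.prod_image (by
        intro a _ b _ h
        simp only [Fin.mk.injEq] at h
        exact Fin.ext (by omega))]
      apply Finset.prod_congr rfl
      intro j _
      have h1 : (List.ofFn (phi y s hs w)).take (s + j.1)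
          = (List.ofFn y).take s ++ (List.ofFn w).take ((s + j.1) - s) :=
        take_phi_ge y hs w (by omega) (by omega)
      simp only [Fin.val_mk]
      rw [h1, Nat.add_sub_cancel_left]
      congr 1
      show (if h : s + j.1 < s then y ⟨s + j.1, _⟩ else w ⟨s + j.1 - s, _⟩) = w j
      rw [dif_neg (by omega : ¬ s + j.1 < s)]
      congr 1
      apply Fin.ext
      simp only [Fin.val_mk]
      omega
  have hr : (∑ k : Fin T, r ((List.ofFn (phi y s hs w)).take (k.1 + 1)))
      = (∑ k ∈ Finset.univ.filter (fun k : Fin T => k.1 < s), r ((List.ofFn y).take (k.1 + 1)))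
        + ∑ k : Fin (T - s), r ((List.ofFn y).take s ++ (List.ofFn w).take (k.1 + 1)) := by
    rw [← Finset.sum_filter_add_sum_filter_not Finset.univ (fun k : Fin T => k.1 < s)]
    congr 1
    · apply Finset.sum_congr rfl
      intro k hk
      have hk' : k.1 < s := by simpa using hk
      rw [take_phi_le y hs w (by omega)]
    · rw [tail_filter_eq_image hs, Finset.sum_image (by
        intro a _ b _ h
        simp only [Fin.mk.injEq] at h
        exact Fin.ext (by omega))]
      apply Finset.sum_congr rfl
      intro j _
      simp only [Fin.val_mk]
      rw [take_phi_ge y hs w (by omega) (by omega)]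
      have : s + j.1 + 1 - s = j.1 + 1 := by omega
      rw [this]
  rw [wt, hseq, hr, mul_add, Real.exp_add]
  ring

/-- suffix partition function -/
def Sfx (πref : List V → V → ℝ) (r : List V → ℝ) (β : ℝ) (p : List V) (m : ℕ) : ℝ :=
  ∑ w : Fin m → V,
    (∏ k : Fin m, πref (p ++ (List.ofFn w).take k.1) (w k)) *
      Real.exp ((1 / β) * ∑ k : Fin m, r (p ++ (List.ofFn w).take (k.1 + 1)))

variable {πref : List V → V → ℝ} {r : List V → ℝ} {β : ℝ}

lemma Sfx_pos (href_pos : ∀ p v, 0 < πref p v) (p : List V) (m : ℕ) :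
    0 < Sfx πref r β p m := by
  apply Finset.sum_pos
  · intro w _
    have : 0 < ∏ k : Fin m, πref (p ++ (List.ofFn w).take k.1) (w k) :=
      Finset.prod_pos fun k _ => href_pos _ _
    positivity
  · exact univ_nonempty

lemma Vtil_eq (y : Fin T → V) {s : ℕ} (hs : s ≤ T) :
    Vtil πref r β T ((List.ofFn y).take s)
      = β * Real.log (Sfx πref r β ((List.ofFn y).take s) (T - s)) := by
  have hlen : ((List.ofFn y).take s).length = s := by simp [hs]
  rw [Vtil, Sfx, hlen]

lemma Zv_pos (href_pos : ∀ p v, 0 < πref p v) :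
    0 < ∑ z : Fin T → V, wt πref r β z := by
  apply Finset.sum_pos
  · intro z _
    have : 0 < seqP πref z := Finset.prod_pos fun k _ => href_pos _ _
    rw [wt]
    positivity
  · exact univ_nonempty

lemma filter_succ (s : ℕ) (hs : s < T) :
    Finset.univ.filter (fun k : Fin T => k.1 < s + 1)
      = insert (⟨s, hs⟩ : Fin T) (Finset.univ.filter (fun k : Fin T => k.1 < s)) := by
  ext k
  simp only [mem_filter, mem_univ, true_and, mem_insert, Fin.ext_iff, Fin.val_mk]
  omega

lemma condStar_eq (href_pos : ∀ p v, 0 < πref p v) (y : Fin T → V) (s : ℕ) (hs : s < T) :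
    condStar πref r β y ⟨s, hs⟩
      = πref ((List.ofFn y).take s) (y ⟨s, hs⟩)
        * Real.exp ((1 / β) * r ((List.ofFn y).take (s + 1)))
        * (Sfx πref r β ((List.ofFn y).take (s + 1)) (T - (s + 1))
            / Sfx πref r β ((List.ofFn y).take s) (T - s)) := by
  have hZ : (0 : ℝ) < ∑ z : Fin T → V, wt πref r β z := Zv_pos href_pos
  have hpis : ∀ z : Fin T → V, piStarSeq πref r β z = wt πref r β z / ∑ z' : Fin T → V, wt πref r β z' := by
    intro z; rfl
  have hA : 0 < ∏ k ∈ Finset.univ.filter (fun k : Fin T => k.1 < s),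
      πref ((List.ofFn y).take k.1) (y k) := Finset.prod_pos fun k _ => href_pos _ _
  have hS : 0 < Sfx πref r β ((List.ofFn y).take s) (T - s) := Sfx_pos href_pos _ _
  rw [condStar]
  simp only [Fin.val_mk, hpis, ← Finset.sum_div]
  rw [filtered_sum πref r β y (by omega : s + 1 ≤ T),
    filtered_sum πref r β y (by omega : s ≤ T)]
  rw [filter_succ s hs, Finset.prod_insert (by simp), Finset.sum_insert (by simp)]
  rw [Fin.val_mk, ← Sfx, ← Sfx, mul_add, Real.exp_add]
  have hE : (0:ℝ) < Real.exp ((1 / β) * ∑ k ∈ Finset.univ.filter (fun k : Fin T => k.1 < s),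
      r ((List.ofFn y).take (k.1 + 1))) := Real.exp_pos _
  field_simp

lemma one_step (hβ : 0 < β) (href_pos : ∀ p v, 0 < πref p v) (y : Fin T → V)
    (s : ℕ) (hs : s < T) :
    Vtil πref r β T ((List.ofFn y).take s)
      = (r ((List.ofFn y).take (s + 1))
          - β * Real.log (condStar πref r β y ⟨s, hs⟩
              / πref ((List.ofFn y).take s) (y ⟨s, hs⟩)))
        + Vtil πref r β T ((List.ofFn y).take (s + 1)) := by
  have hS1 : 0 < Sfx πref r β ((List.ofFn y).take (s+1)) (T - (s+1)) := Sfx_pos href_pos _ _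
  have hS0 : 0 < Sfx πref r β ((List.ofFn y).take s) (T - s) := Sfx_pos href_pos _ _
  have hp : 0 < πref ((List.ofFn y).take s) (y ⟨s, hs⟩) := href_pos _ _
  rw [condStar_eq href_pos y s hs, Vtil_eq y (by omega : s ≤ T),
    Vtil_eq y (by omega : s + 1 ≤ T)]
  have hx : πref ((List.ofFn y).take s) (y ⟨s, hs⟩)
        * Real.exp ((1 / β) * r ((List.ofFn y).take (s + 1)))
        * (Sfx πref r β ((List.ofFn y).take (s + 1)) (T - (s + 1))
            / Sfx πref r β ((List.ofFn y).take s) (T - s))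
        / πref ((List.ofFn y).take s) (y ⟨s, hs⟩)
      = Real.exp ((1 / β) * r ((List.ofFn y).take (s + 1)))
          * Sfx πref r β ((List.ofFn y).take (s + 1)) (T - (s + 1))
          / Sfx πref r β ((List.ofFn y).take s) (T - s) := by
    field_simp
  rw [hx, Real.log_div (by positivity) (by positivity),
    Real.log_mul (by positivity) (by positivity), Real.log_exp]
  field_simp
  ring

lemma telescope (g : ℕ → ℝ) (t : ℕ) : ∀ t', t ≤ t' →
    ∑ s ∈ Finset.Ico t t', (g s - g (s + 1)) = g t - g t' := by
  intro t' h
  induction t', h using Nat.le_induction with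
  | base => simp
  | succ n hn ih => rw [Finset.sum_Ico_succ_top hn, ih]; ring


end
end TokenGenAux

open TokenGenAux in
set_option maxHeartbeats 1000000 in
/-- token-level generation consistency at optimality, for any
`0 ≤ t ≤ t' ≤ T`. -/
theorem token_level_generation_consistency
    {V : Type*} [Fintype V] [DecidableEq V] [Nonempty V] {T : ℕ} (hT : 1 ≤ T)
    (πref : List V → V → ℝ) (href_pos : ∀ p v, 0 < πref p v)
    (href_sum : ∀ p, ∑ v, πref p v = 1)
    (r : List V → ℝ) (β : ℝ) (hβ : 0 < β)
    (y : Fin T → V) (t t' : ℕ) (htt' : t ≤ t') (ht'T : t' ≤ T) :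
    Vtil πref r β T ((List.ofFn y).take t)
      = (∑ s ∈ (Finset.Ico t t').attach,
          (r ((List.ofFn y).take (s.1 + 1))
            - β * Real.log
                (condStar πref r β y
                    ⟨s.1, lt_of_lt_of_le (Finset.mem_Ico.mp s.2).2 ht'T⟩
                  / πref ((List.ofFn y).take s.1)
                      (y ⟨s.1, lt_of_lt_of_le (Finset.mem_Ico.mp s.2).2 ht'T⟩))))
        + Vtil πref r β T ((List.ofFn y).take t') := by
  have hterm : ∀ s : {x // x ∈ Finset.Ico t t'},
      (r ((List.ofFn y).take (s.1 + 1))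
        - β * Real.log
            (condStar πref r β y ⟨s.1, lt_of_lt_of_le (Finset.mem_Ico.mp s.2).2 ht'T⟩
              / πref ((List.ofFn y).take s.1)
                  (y ⟨s.1, lt_of_lt_of_le (Finset.mem_Ico.mp s.2).2 ht'T⟩)))
      = Vtil πref r β T ((List.ofFn y).take s.1)
          - Vtil πref r β T ((List.ofFn y).take (s.1 + 1)) := by
    intro s
    have h1 := one_step (πref := πref) (r := r) hβ href_pos y s.1
      (lt_of_lt_of_le (Finset.mem_Ico.mp s.2).2 ht'T)
    linarith
  rw [Finset.sum_congr rfl (fun s _ => hterm s),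
    Finset.sum_attach (Finset.Ico t t')
      (fun s => Vtil πref r β T ((List.ofFn y).take s)
        - Vtil πref r β T ((List.ofFn y).take (s + 1))),
    telescope (fun s => Vtil πref r β T ((List.ofFn y).take s)) t t' htt']
  ring
end
end
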